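/- arXiv:1509.08100 — 2 statements merged into one kernel-verified Lean document; each statement's English description precedes it below -/
import Mathlib

section
/- Under the asymptotic framework, if ω_m is a sequence of positive solutions of the Bayes oracle equation (1+u_m)^(−1/2)·d(ω·(1+u_m)^(−1/2))/d(ω) = v_m, then the type I risk component satisfies v_m·2(1 − D(ω_m)) → C_1 = 2√C·d(√C)/γ as m → ∞. -/
open MeasureTheory Filter

/-- Cumulative distribution function of a density `d` with respect to Lebesgue measure. -/
noncomputable def cdf (d : ℝ → ℝ) (x : ℝ) : ℝ := ∫ t in Set.Iic x, d t

/-- A monotone polynomial tail (MPT) density with tail index `γ` and tail constant `Cd`: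
a probability density function that is even (or supported on the nonnegative half-line),
strictly positive on `(0, ∞)`, satisfies `d x * x ^ (γ + 1) → Cd` as `x → ∞`, and has a
monotone likelihood ratio: for every `θ > 1`, `x ↦ d (x / θ) / d x` is strictly increasing
on `(0, ∞)`. -/
structure IsMPT (d : ℝ → ℝ) (γ Cd : ℝ) : Prop where
  gamma_pos : 0 < γ
  Cd_pos : 0 < Cd
  nonneg : ∀ x, 0 ≤ d x
  integrable : Integrable d
  integral_one : ∫ x, d x = 1
  even_or_halfline : (∀ x, d (-x) = d x) ∨ (∀ x < 0, d x = 0)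
  pos : ∀ x, 0 < x → 0 < d x
  tail : Tendsto (fun x => d x * x ^ (γ + 1)) atTop (nhds Cd)
  mlr : ∀ θ : ℝ, 1 < θ → StrictMonoOn (fun x => d (x / θ) / d x) (Set.Ioi 0)

/-! With `f = tailProfile d γ`, i.e. `f x = d x * x ^ (γ + 1)`, and `s = (1 + u) ^ (-1/2)`,
the oracle equation reads `f (ω s) / f ω = v s ^ γ`, and `v s ^ γ → ρ = f (√C) / Cd > 0`.
The monotone likelihood ratio makes `f` strictly increasing with limit `Cd`, and makes
`f (x s) / f x` increasing in `x`. As `d` is integrable near `0`, `f → 0` at `0+`, so along a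
bounded subsequence of `ω` the ratio `v s ^ γ` would tend to `0`: hence `ω → ∞`,
`f (ω s) → ρ Cd = f (√C)` and `ω s → √C`. Finally `1 - D ω ∼ Cd ω ^ (-γ) / γ` and
`v ω ^ (-γ) = v s ^ γ (ω s) ^ (-γ) → ρ C ^ (-γ/2)`. -/

open Set Topology

lemma StrictMonoOn.lt_of_tendsto_atTop {α β : Type*} [LinearOrder α] [NoMaxOrder α]
    [LinearOrder β] [TopologicalSpace β] [OrderClosedTopology β] {g : α → β} {c x : α} {L : β}
    (hg : StrictMonoOn g (Ioi c)) (hL : Tendsto g atTop (𝓝 L)) (hx : c < x) : g x < L := by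
  have : Nonempty α := ⟨x⟩
  obtain ⟨y, hxy⟩ := exists_gt x
  refine (hg hx (hx.trans hxy) hxy).trans_le (ge_of_tendsto hL ?_)
  filter_upwards [eventually_ge_atTop y] with t hyt
  exact hg.monotoneOn (hx.trans hxy) (hx.trans_le (hxy.le.trans hyt)) hyt

lemma StrictMonoOn.tendsto_of_tendsto_comp {ι α β : Type*} [LinearOrder α] [TopologicalSpace α]
    [OrderTopology α] [LinearOrder β] [TopologicalSpace β] [OrderTopology β] {f : α → β}
    {c a : α} {x : ι → α} {l : Filter ι} (hf : StrictMonoOn f (Ioi c)) (ha : c < a)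
    (hx : ∀ᶠ i in l, c < x i) (hfx : Tendsto (fun i => f (x i)) l (𝓝 (f a))) :
    Tendsto x l (𝓝 a) := by
  refine tendsto_order.2 ⟨fun b hb => ?_, fun b hb => ?_⟩
  · rcases le_or_gt b c with hbc | hcb
    · filter_upwards [hx] with i hi using hbc.trans_lt hi
    · filter_upwards [hx, hfx.eventually (lt_mem_nhds ((hf.lt_iff_lt hcb ha).2 hb))] with i hi hfi
      exact (hf.lt_iff_lt hcb hi).1 hfi
  · have hcb : c < b := ha.trans hb
    filter_upwards [hx, hfx.eventually (gt_mem_nhds ((hf.lt_iff_lt ha hcb).2 hb))] with i hi hfi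
    exact (hf.lt_iff_lt hi hcb).1 hfi

lemma exists_mem_Ioo_mul_rpow_lt {g : ℝ → ℝ} {γ t ε : ℝ} (hγ : 0 ≤ γ) (ht : 0 < t)
    (hg : IntegrableOn g (Ioo 0 t)) (hε : 0 < ε) : ∃ x ∈ Ioo 0 t, g x * x ^ (γ + 1) < ε := by
  by_contra! hge
  have hpow : IntegrableOn (fun x : ℝ => x ^ (-(γ + 1))) (Ioo 0 t) := by
    refine Integrable.mono' (hg.div_const ε) (by fun_prop) ?_
    filter_upwards [ae_restrict_mem measurableSet_Ioo] with x hx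
    have hx0 : 0 < x := hx.1
    rw [Real.norm_eq_abs, abs_of_pos (Real.rpow_pos_of_pos hx0 _), Real.rpow_neg hx0.le,
      le_div_iff₀ hε, inv_mul_le_iff₀ (Real.rpow_pos_of_pos hx0 _), mul_comm]
    exact hge x hx
  have := (intervalIntegral.integrableOn_Ioo_rpow_iff ht).1 hpow
  linarith

lemma abs_integral_Ioi_mul_rpow_sub_le {g : ℝ → ℝ} {γ c δ x : ℝ} (hγ : 0 < γ) (hx : 0 < x)
    (hg : IntegrableOn g (Ioi x)) (hb : ∀ t ∈ Ioi x, |g t * t ^ (γ + 1) - c| ≤ δ) :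
    |(∫ t in Ioi x, g t) * x ^ γ - c / γ| ≤ δ / γ := by
  have hexp : -(γ + 1) < -1 := by linarith
  have hpow : IntegrableOn (fun t : ℝ => t ^ (-(γ + 1))) (Ioi x) :=
    integrableOn_Ioi_rpow_of_lt hexp hx
  have hval : ∫ t in Ioi x, t ^ (-(γ + 1)) = x ^ (-γ) / γ := by
    rw [integral_Ioi_rpow_of_lt hexp hx, show -(γ + 1) + 1 = -γ by ring, neg_div_neg_eq]
  have hdiff : |(∫ t in Ioi x, g t) - c * (x ^ (-γ) / γ)| ≤ δ * (x ^ (-γ) / γ) := by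
    have hsub : (∫ t in Ioi x, g t) - c * (x ^ (-γ) / γ)
        = ∫ t in Ioi x, (g t - c * t ^ (-(γ + 1))) := by
      rw [integral_sub hg (hpow.const_mul c), integral_const_mul, hval]
    have hbnd : δ * (x ^ (-γ) / γ) = ∫ t in Ioi x, δ * t ^ (-(γ + 1)) := by
      rw [integral_const_mul, hval]
    rw [hsub, hbnd, ← Real.norm_eq_abs]
    refine norm_integral_le_of_norm_le (hpow.const_mul δ) ?_
    filter_upwards [ae_restrict_mem measurableSet_Ioi] with t ht
    have ht0 : 0 < t := hx.trans ht
    have hfac : g t - c * t ^ (-(γ + 1)) = (g t * t ^ (γ + 1) - c) * t ^ (-(γ + 1)) := by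
      rw [Real.rpow_neg ht0.le]
      field_simp
    rw [Real.norm_eq_abs, hfac, abs_mul, abs_of_pos (Real.rpow_pos_of_pos ht0 _)]
    exact mul_le_mul_of_nonneg_right (hb t ht) (Real.rpow_pos_of_pos ht0 _).le
  have hxγ : 0 < x ^ γ := Real.rpow_pos_of_pos hx γ
  have hcancel : x ^ (-γ) * x ^ γ = 1 := by rw [← Real.rpow_add hx, neg_add_cancel, Real.rpow_zero]
  calc |(∫ t in Ioi x, g t) * x ^ γ - c / γ|
      = |(∫ t in Ioi x, g t) - c * (x ^ (-γ) / γ)| * x ^ γ := by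
        rw [← abs_of_pos hxγ, ← abs_mul, abs_of_pos hxγ, sub_mul]
        congr 2
        rw [mul_div_assoc', div_mul_eq_mul_div, mul_assoc, hcancel, mul_one]
    _ ≤ δ * (x ^ (-γ) / γ) * x ^ γ := mul_le_mul_of_nonneg_right hdiff hxγ.le
    _ = δ / γ := by rw [mul_div_assoc', div_mul_eq_mul_div, mul_assoc, hcancel, mul_one]

lemma tendsto_integral_Ioi_mul_rpow {g : ℝ → ℝ} {γ c a : ℝ} (hγ : 0 < γ)
    (hg : IntegrableOn g (Ioi a)) (htail : Tendsto (fun x => g x * x ^ (γ + 1)) atTop (𝓝 c)) :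
    Tendsto (fun x => (∫ t in Ioi x, g t) * x ^ γ) atTop (𝓝 (c / γ)) := by
  rw [Metric.tendsto_atTop]
  intro ε hε
  obtain ⟨M, hM⟩ := Metric.tendsto_atTop.1 htail (γ * ε / 2) (by positivity)
  refine ⟨max M (max a 1), fun x hx => ?_⟩
  have hx0 : 0 < x := lt_of_lt_of_le one_pos (le_of_max_le_right (le_of_max_le_right hx))
  have hbound := abs_integral_Ioi_mul_rpow_sub_le hγ hx0
    (hg.mono_set (Ioi_subset_Ioi (le_of_max_le_left (le_of_max_le_right hx))))
    (fun t ht => (hM t ((le_of_max_le_left hx).trans (le_of_lt ht))).le)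
  rw [Real.dist_eq]
  calc _ ≤ γ * ε / 2 / γ := hbound
    _ < ε := by rw [mul_div_assoc, mul_div_cancel_left₀ _ hγ.ne']; linarith

lemma tendsto_mul_one_add_rpow {ι : Type*} {l : Filter ι} {u v : ι → ℝ} {a ρ : ℝ}
    (hu : ∀ i, 0 < u i) (hu' : Tendsto u l atTop)
    (hvu : Tendsto (fun i => v i * u i ^ a) l (𝓝 ρ)) :
    Tendsto (fun i => v i * (1 + u i) ^ a) l (𝓝 ρ) := by
  have hfac : Tendsto (fun i => (1 + (u i)⁻¹) ^ a) l (𝓝 1) := by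
    have hbase : Tendsto (fun i => 1 + (u i)⁻¹) l (𝓝 1) := by
      simpa using (tendsto_inv_atTop_zero.comp hu').const_add 1
    simpa using hbase.rpow_const (Or.inl one_ne_zero)
  have hprod := hvu.mul hfac
  rw [mul_one] at hprod
  refine hprod.congr fun i => ?_
  have hsplit : 1 + u i = u i * (1 + (u i)⁻¹) := by
    rw [mul_add, mul_one, mul_inv_cancel₀ (hu i).ne', add_comm]
  rw [hsplit, Real.mul_rpow (hu i).le (by positivity [hu i]), mul_assoc]

lemma tendsto_one_add_rpow_nhds_zero {ι : Type*} {l : Filter ι} {u : ι → ℝ} {p : ℝ}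
    (hp : p < 0) (hu : Tendsto u l atTop) : Tendsto (fun i => (1 + u i) ^ p) l (𝓝 0) := by
  simpa [Function.comp_def] using
    (tendsto_rpow_neg_atTop (neg_pos.2 hp)).comp (tendsto_atTop_add_const_left _ 1 hu)

noncomputable def tailProfile (d : ℝ → ℝ) (γ x : ℝ) : ℝ := d x * x ^ (γ + 1)

lemma tailProfile_mul_div {d : ℝ → ℝ} {γ x s : ℝ} (hx : 0 < x) (hs : 0 ≤ s) :
    tailProfile d γ (x * s) / tailProfile d γ x = s ^ (γ + 1) * (d (x * s) / d x) := by
  have hxγ : x ^ (γ + 1) ≠ 0 := (Real.rpow_pos_of_pos hx _).ne'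
  rw [tailProfile, tailProfile, Real.mul_rpow hx.le hs, mul_comm (x ^ _), ← mul_assoc,
    mul_div_mul_right _ _ hxγ, mul_comm (d _), mul_div_assoc]

lemma tailProfile_sqrt (d : ℝ → ℝ) (γ : ℝ) {C : ℝ} (hC : 0 ≤ C) :
    tailProfile d γ (Real.sqrt C) = C ^ ((γ + 1) / 2) * d (Real.sqrt C) := by
  rw [tailProfile, Real.sqrt_eq_rpow, ← Real.rpow_mul hC, mul_comm, one_div_mul_eq_div]

namespace IsMPT

variable {d : ℝ → ℝ} {γ Cd : ℝ}

lemma tailProfile_pos (h : IsMPT d γ Cd) {x : ℝ} (hx : 0 < x) : 0 < tailProfile d γ x :=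
  mul_pos (h.pos x hx) (Real.rpow_pos_of_pos hx _)

lemma one_sub_cdf (h : IsMPT d γ Cd) (x : ℝ) : 1 - cdf d x = ∫ t in Ioi x, d t := by
  rw [← h.integral_one, ← intervalIntegral.integral_Iic_add_Ioi h.integrable.integrableOn
    h.integrable.integrableOn, cdf, add_sub_cancel_left]

lemma tendsto_ratio (h : IsMPT d γ Cd) {θ : ℝ} (hθ : 0 < θ) :
    Tendsto (fun x => d (x / θ) / d x) atTop (𝓝 (θ ^ (γ + 1))) := by
  have hθtail : Tendsto (fun x => tailProfile d γ (x / θ)) atTop (𝓝 Cd) :=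
    h.tail.comp (tendsto_id.atTop_div_const hθ)
  have hlim := ((hθtail.div h.tail h.Cd_pos.ne').mul_const (θ ^ (γ + 1)))
  rw [div_self h.Cd_pos.ne', one_mul] at hlim
  refine hlim.congr' ?_
  filter_upwards [eventually_gt_atTop 0] with x hx
  have hd : d x ≠ 0 := (h.pos x hx).ne'
  have hxγ : x ^ (γ + 1) ≠ 0 := (Real.rpow_pos_of_pos hx _).ne'
  have hθγ : θ ^ (γ + 1) ≠ 0 := (Real.rpow_pos_of_pos hθ _).ne'
  simp only [Pi.div_apply, tailProfile, Real.div_rpow hx.le hθ.le]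
  field_simp

lemma strictMonoOn_tailProfile (h : IsMPT d γ Cd) : StrictMonoOn (tailProfile d γ) (Ioi 0) := by
  intro a (ha : 0 < a) b (hb : 0 < b) hab
  have hθ : 1 < b / a := (one_lt_div ha).2 hab
  have hlt : d (b / (b / a)) / d b < (b / a) ^ (γ + 1) :=
    (h.mlr _ hθ).lt_of_tendsto_atTop (h.tendsto_ratio (by positivity)) hb
  rw [div_div_cancel₀ hb.ne', div_lt_iff₀ (h.pos b hb), Real.div_rpow hb.le ha.le,
    div_mul_eq_mul_div, lt_div_iff₀ (Real.rpow_pos_of_pos ha _)] at hlt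
  rw [tailProfile, tailProfile]
  linarith

lemma tailProfile_mul_div_le (h : IsMPT d γ Cd) {s x y : ℝ} (hs : 0 < s) (hs1 : s < 1)
    (hx : 0 < x) (hxy : x ≤ y) :
    tailProfile d γ (x * s) / tailProfile d γ x ≤ tailProfile d γ (y * s) / tailProfile d γ y := by
  have hmono := (h.mlr s⁻¹ (one_lt_inv₀ hs |>.2 hs1)).monotoneOn hx (hx.trans_le hxy) hxy
  simp only [div_inv_eq_mul] at hmono
  rw [tailProfile_mul_div hx hs.le, tailProfile_mul_div (hx.trans_le hxy) hs.le]
  exact mul_le_mul_of_nonneg_left hmono (Real.rpow_pos_of_pos hs _).le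

lemma tendsto_tailProfile_nhdsGT_zero (h : IsMPT d γ Cd) :
    Tendsto (tailProfile d γ) (𝓝[>] 0) (𝓝 0) := by
  refine tendsto_order.2 ⟨fun b hb => ?_, fun b hb => ?_⟩
  · filter_upwards [self_mem_nhdsWithin] with x (hx : 0 < x)
    exact hb.trans (h.tailProfile_pos hx)
  · obtain ⟨x₀, hx₀, hlt⟩ :=
      exists_mem_Ioo_mul_rpow_lt h.gamma_pos.le one_pos h.integrable.integrableOn hb
    filter_upwards [Ioo_mem_nhdsGT hx₀.1] with x hx
    exact (h.strictMonoOn_tailProfile.monotoneOn hx.1 hx₀.1 hx.2.le).trans_lt hlt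

lemma tendsto_atTop_of_tendsto_ratio (h : IsMPT d γ Cd) {ι : Type*} {l : Filter ι}
    {s ω : ι → ℝ} {ρ : ℝ} (hs : ∀ i, 0 < s i ∧ s i < 1) (hs0 : Tendsto s l (𝓝 0))
    (hω : ∀ i, 0 < ω i) (hρ : 0 < ρ)
    (hratio : Tendsto (fun i => tailProfile d γ (ω i * s i) / tailProfile d γ (ω i)) l (𝓝 ρ)) :
    Tendsto ω l atTop := by
  refine tendsto_atTop.2 fun B => ?_
  obtain ⟨B', hBB', hB'⟩ : ∃ B', B ≤ B' ∧ 0 < B' :=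
    ⟨max B 1, le_max_left _ _, zero_lt_one.trans_le (le_max_right _ _)⟩
  have hBs : Tendsto (fun i => B' * s i) l (𝓝[>] 0) := by
    refine tendsto_nhdsWithin_iff.2 ⟨?_, Eventually.of_forall fun i => mul_pos hB' (hs i).1⟩
    simpa using hs0.const_mul B'
  have hratioB := (h.tendsto_tailProfile_nhdsGT_zero.comp hBs).div_const (tailProfile d γ B')
  rw [zero_div] at hratioB
  filter_upwards [hratio.eventually (lt_mem_nhds (half_lt_self hρ)),
    hratioB.eventually (gt_mem_nhds (half_pos hρ))] with i hi hBi
  by_contra! hlt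
  have := h.tailProfile_mul_div_le (hs i).1 (hs i).2 (hω i) (hlt.le.trans hBB')
  simp only [Function.comp_apply] at hBi
  linarith

lemma tendsto_mul_of_tendsto_ratio (h : IsMPT d γ Cd) {ι : Type*} {l : Filter ι}
    {s ω : ι → ℝ} {a : ℝ} (hs : ∀ i, 0 < s i) (hω : ∀ i, 0 < ω i) (ha : 0 < a)
    (hωtop : Tendsto ω l atTop)
    (hratio : Tendsto (fun i => tailProfile d γ (ω i * s i) / tailProfile d γ (ω i)) l
      (𝓝 (tailProfile d γ a / Cd))) :
    Tendsto (fun i => ω i * s i) l (𝓝 a) := by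
  refine h.strictMonoOn_tailProfile.tendsto_of_tendsto_comp ha
    (Eventually.of_forall fun i => mul_pos (hω i) (hs i)) ?_
  have hlim := hratio.mul (h.tail.comp hωtop)
  rw [div_mul_cancel₀ _ h.Cd_pos.ne'] at hlim
  refine hlim.congr fun i => ?_
  exact div_mul_cancel₀ _ (h.tailProfile_pos (hω i)).ne'

lemma tendsto_mul_one_sub_cdf (h : IsMPT d γ Cd) {ι : Type*} {l : Filter ι}
    {s v ω : ι → ℝ} {a : ℝ} (hs : ∀ i, 0 < s i) (hω : ∀ i, 0 < ω i) (ha : 0 < a)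
    (hωtop : Tendsto ω l atTop) (hωs : Tendsto (fun i => ω i * s i) l (𝓝 a))
    (hvs : Tendsto (fun i => v i * s i ^ γ) l (𝓝 (tailProfile d γ a / Cd))) :
    Tendsto (fun i => v i * (1 - cdf d (ω i))) l (𝓝 (a * d a / γ)) := by
  have hlim := ((tendsto_integral_Ioi_mul_rpow h.gamma_pos
    (h.integrable.integrableOn (s := Ioi 0)) h.tail).comp hωtop).mul
    (hvs.mul (hωs.rpow_const (p := -γ) (Or.inl ha.ne')))
  have hconst : Cd / γ * (tailProfile d γ a / Cd * a ^ (-γ)) = a * d a / γ := by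
    have hpow : a ^ (γ + 1) * a ^ (-γ) = a := by
      rw [← Real.rpow_add ha, add_neg_cancel_comm, Real.rpow_one]
    calc Cd / γ * (tailProfile d γ a / Cd * a ^ (-γ)) = d a * (a ^ (γ + 1) * a ^ (-γ)) / γ := by
          rw [tailProfile]
          field_simp [h.Cd_pos.ne']
      _ = a * d a / γ := by rw [hpow, mul_comm]
  rw [← hconst]
  refine hlim.congr fun i => ?_
  have hcancel : ω i ^ γ * s i ^ γ * (ω i * s i) ^ (-γ) = 1 := by
    rw [← Real.mul_rpow (hω i).le (hs i).le, ← Real.rpow_add (mul_pos (hω i) (hs i)),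
      add_neg_cancel, Real.rpow_zero]
  rw [Function.comp_apply, h.one_sub_cdf]
  linear_combination (∫ t in Ioi (ω i), d t) * v i * hcancel

end IsMPT

theorem oracle_typeI_risk_general (d : ℝ → ℝ) (γ Cd : ℝ) (h : IsMPT d γ Cd)
    (C : ℝ) (hC : 0 < C)
    (u v : ℕ → ℝ) (hu : ∀ m, 0 < u m) (hu' : Tendsto u atTop atTop)
    (hvu : Tendsto (fun m => v m * u m ^ (-(γ / 2))) atTop
      (nhds (C ^ ((γ + 1) / 2) * d (Real.sqrt C) / Cd)))
    (ω : ℕ → ℝ) (hω : ∀ m, 0 < ω m)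
    (hωeq : ∀ m, (1 + u m) ^ (-(1 : ℝ) / 2) * d (ω m * (1 + u m) ^ (-(1 : ℝ) / 2)) / d (ω m)
      = v m) :
    Tendsto (fun m => v m * (2 * (1 - cdf d (ω m)))) atTop
      (nhds (2 * Real.sqrt C * d (Real.sqrt C) / γ)) := by
  set s : ℕ → ℝ := fun m => (1 + u m) ^ (-(1 : ℝ) / 2)
  have hu1 : ∀ m, 1 < 1 + u m := fun m => lt_add_of_pos_right 1 (hu m)
  have hs : ∀ m, 0 < s m ∧ s m < 1 := fun m =>
    ⟨Real.rpow_pos_of_pos (zero_lt_one.trans (hu1 m)) _,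
      Real.rpow_lt_one_of_one_lt_of_neg (hu1 m) (by norm_num)⟩
  have hsqrt : 0 < Real.sqrt C := Real.sqrt_pos.2 hC
  have hvs : Tendsto (fun m => v m * s m ^ γ) atTop (𝓝 (tailProfile d γ (Real.sqrt C) / Cd)) := by
    have hsγ : ∀ m, s m ^ γ = (1 + u m) ^ (-(γ / 2)) := fun m => by
      rw [← Real.rpow_mul (zero_lt_one.trans (hu1 m)).le]
      congr 1
      ring
    rw [tailProfile_sqrt d γ hC.le]
    simpa only [hsγ] using tendsto_mul_one_add_rpow hu hu' hvu
  have hratio : Tendsto (fun m => tailProfile d γ (ω m * s m) / tailProfile d γ (ω m)) atTop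
      (𝓝 (tailProfile d γ (Real.sqrt C) / Cd)) := by
    refine hvs.congr fun m => ?_
    rw [tailProfile_mul_div (hω m) (hs m).1.le, Real.rpow_add_one (hs m).1.ne', ← hωeq m]
    ring
  have hωtop : Tendsto ω atTop atTop :=
    h.tendsto_atTop_of_tendsto_ratio hs (tendsto_one_add_rpow_nhds_zero (by norm_num) hu') hω
      (div_pos (h.tailProfile_pos hsqrt) h.Cd_pos) hratio
  have hωs := h.tendsto_mul_of_tendsto_ratio (fun m => (hs m).1) hω hsqrt hωtop hratio
  convert (h.tendsto_mul_one_sub_cdf (fun m => (hs m).1) hω hsqrt hωtop hωs hvs).const_mul 2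
    using 2 <;> ring

/-- Proposition 2 (type I risk component): under the asymptotic framework, if `ω_m` solves the
Bayes oracle equation, then `v_m * 2 * (1 - D ω_m) → C₁ = 2 * √C * d (√C) / γ`. -/
theorem oracle_typeI_risk (d : ℝ → ℝ) (γ Cd : ℝ) (h : IsMPT d γ Cd)
    (heven : ∀ x, d (-x) = d x) (hcont : ContinuousOn d (Set.Ioi 0))
    (C : ℝ) (hC : 0 < C)
    (u v : ℕ → ℝ) (hu : ∀ m, 0 < u m) (hu' : Tendsto u atTop atTop)
    (hv : ∀ m, 0 < v m)
    (hvu : Tendsto (fun m => v m * u m ^ (-(γ / 2))) atTop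
      (nhds (C ^ ((γ + 1) / 2) * d (Real.sqrt C) / Cd)))
    (ω : ℕ → ℝ) (hω : ∀ m, 0 < ω m)
    (hωeq : ∀ m, (1 + u m) ^ (-(1 : ℝ) / 2) * d (ω m * (1 + u m) ^ (-(1 : ℝ) / 2)) / d (ω m)
      = v m) :
    Tendsto (fun m => v m * (2 * (1 - cdf d (ω m)))) atTop
      (nhds (2 * Real.sqrt C * d (Real.sqrt C) / γ)) :=
  oracle_typeI_risk_general d γ Cd h C hC u v hu hu' hvu ω hω hωeq
end

section
/- Under the asymptotic framework with p_m → 0, let α_m ∈ (0,1) and let ω_{B,m} > 0 be a solution of the BFDR equation (1 − D(ω))/(1 − D(ω·(1+u_m)^(−1/2))) = r_{α_m}/f_m, where r_α = α/(1−α) and f_m = (1−p_m)/p_m. Then the procedure with threshold ω_{B,m} is asymptotically Bayes optimal under sparsity, i.e., ω_{B,m}²/(C·(v_m/C_0)^(2/γ)) → 1, if and only if δ_m·r_{α_m} → C_1/(1 − C_2), where δ_m = v_m/f_m, C_1 = 2√C·d(√C)/γ and C_2 = 2D(√C) − 1. -/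
open MeasureTheory Filter

/-!
Write `S = 1 - D` and `h t = t ^ γ * S t`. Since `v_m = δ_m f_m`, the BFDR equation reads
`δ_m r_{α_m} = v_m (1 + u_m) ^ (-γ/2) · h ω / h (ω / √(1 + u_m))` with `ω = ω_{B,m}`.
Substituting `x = t r` in `S t` shows that `h t` is an integral of `d (t r) (t r) ^ (γ + 1)`
against `r ^ (-(γ + 1))` on `(1, ∞)`, so the tail condition gives `h t → C_d / γ`, and
the monotone likelihood ratio makes `x ↦ d x x ^ (γ + 1)`, hence `h`, strictly increasing.
Moreover `v_m (1 + u_m) ^ (-γ/2) → C_0`, and ABOS is equivalent to `ω / √u_m → √C`.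
If `ω / √u_m → √C`, then `ω → ∞` and `ω / √(1 + u_m) → √C`, so `δ_m r_{α_m}` tends to
`C_0 (C_d / γ) / h √C = C_1 / (1 - C_2)`. Conversely, if `δ_m r_{α_m}` has this limit, then
`S ω ≤ δ_m r_{α_m} / v_m → 0` forces `ω → ∞`, hence `h (ω / √(1 + u_m)) → h √C`, and strict
monotonicity of `h` gives `ω / √(1 + u_m) → √C`.
-/

open Set Asymptotics
open scoped Topology

noncomputable def survival (d : ℝ → ℝ) (x : ℝ) : ℝ := ∫ t in Ioi x, d t

noncomputable def scaledSurvival (d : ℝ → ℝ) (γ t : ℝ) : ℝ := t ^ γ * survival d t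

theorem setIntegral_pos_of_forall_mem_pos {X : Type*} [MeasurableSpace X] {μ : Measure X}
    {s : Set X} {f : X → ℝ} (hs : MeasurableSet s) (hf : IntegrableOn f s μ)
    (hpos : ∀ x ∈ s, 0 < f x) (hμ : μ s ≠ 0) : 0 < ∫ x in s, f x ∂μ := by
  rw [setIntegral_pos_iff_support_of_nonneg_ae
    (ae_restrict_of_forall_mem hs fun x hx => (hpos x hx).le) hf]
  exact (pos_iff_ne_zero.2 hμ).trans_le (measure_mono fun x hx => ⟨(hpos x hx).ne', hx⟩)

theorem tendsto_of_tendsto_comp_of_strictMonoOn {ι : Type*} {l : Filter ι} {f : ℝ → ℝ}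
    {a c : ℝ} {x : ι → ℝ} (hf : StrictMonoOn f (Ioi a)) (hc : a < c)
    (hx : ∀ᶠ i in l, a < x i) (hfx : Tendsto (fun i => f (x i)) l (𝓝 (f c))) :
    Tendsto x l (𝓝 c) := by
  refine tendsto_order.2 ⟨fun y hy => ?_, fun y hy => ?_⟩
  · set z := max y ((a + c) / 2)
    have hz : a < z := (by linarith : a < (a + c) / 2).trans_le (le_max_right _ _)
    have hzc : z < c := max_lt hy (by linarith)
    filter_upwards [hx, (tendsto_order.1 hfx).1 _ (hf hz hc hzc)] with i hxi hfi
    exact (le_max_left _ _).trans_lt ((hf.lt_iff_lt hz hxi).1 hfi)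
  · filter_upwards [hx, (tendsto_order.1 hfx).2 _ (hf hc (hc.trans hy) hy)] with i hxi hfi
    exact (hf.lt_iff_lt hxi (hc.trans hy)).1 hfi

section Survival

variable {d : ℝ → ℝ}

theorem cdf_add_survival (hd : Integrable d) (x : ℝ) : cdf d x + survival d x = ∫ t, d t :=
  intervalIntegral.integral_Iic_add_Ioi hd.integrableOn hd.integrableOn

theorem one_sub_cdf_eq_survival (hd : Integrable d) (h1 : ∫ t, d t = 1) (x : ℝ) :
    1 - cdf d x = survival d x := by
  linarith [cdf_add_survival hd x]

theorem survival_antitone (hd : Integrable d) (hnn : ∀ x, 0 ≤ d x) : Antitone (survival d) :=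
  fun _ _ hab => setIntegral_mono_set hd.integrableOn (ae_of_all _ hnn)
    (Ioi_subset_Ioi hab).eventuallyLE

theorem survival_pos (hd : Integrable d) (hnn : ∀ x, 0 ≤ d x) (hpos : ∀ x, 0 < x → 0 < d x)
    (x : ℝ) : 0 < survival d x :=
  (setIntegral_pos_of_forall_mem_pos measurableSet_Ioi hd.integrableOn
    (fun t ht => hpos t ((le_max_right x 0).trans_lt ht)) (by simp)).trans_le
    (survival_antitone hd hnn (le_max_left x 0))

theorem survival_le_one (hd : Integrable d) (h1 : ∫ t, d t = 1) (hnn : ∀ x, 0 ≤ d x) (x : ℝ) :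
    survival d x ≤ 1 := by
  have : 0 ≤ cdf d x := setIntegral_nonneg measurableSet_Iic fun t _ => hnn t
  linarith [one_sub_cdf_eq_survival hd h1 x]

theorem continuous_survival (hd : Integrable d) : Continuous (survival d) := by
  have h (x : ℝ) : survival d x = survival d 0 - ∫ t in (0 : ℝ)..x, d t := by
    rw [← intervalIntegral.integral_Ioi_sub_Ioi' hd.integrableOn hd.integrableOn, survival,
      survival, sub_sub_cancel]
  exact (continuous_const.sub (hd.continuous_primitive 0)).congr fun x => (h x).symm

theorem tendsto_atTop_of_tendsto_survival_zero (hd : Integrable d) (hnn : ∀ x, 0 ≤ d x)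
    (hpos : ∀ x, 0 < x → 0 < d x) {ι : Type*} {l : Filter ι} {x : ι → ℝ}
    (hx : Tendsto (fun i => survival d (x i)) l (𝓝 0)) : Tendsto x l atTop := by
  refine tendsto_atTop.2 fun M => ?_
  filter_upwards [(tendsto_order.1 hx).2 _ (survival_pos hd hnn hpos M)] with i hi
  by_contra! hlt
  exact hi.not_ge (survival_antitone hd hnn hlt.le)

theorem tendsto_atTop_of_tendsto_mul_survival_div (hd : Integrable d)
    (h1 : ∫ t, d t = 1) (hnn : ∀ x, 0 ≤ d x) (hpos : ∀ x, 0 < x → 0 < d x) {ι : Type*}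
    {l : Filter ι} {ω b v R : ι → ℝ} {L : ℝ} (hv : Tendsto v l atTop) (hR : Tendsto R l (𝓝 L))
    (hRv : ∀ᶠ i in l, R i = v i * (survival d (ω i) / survival d (b i))) :
    Tendsto ω l atTop := by
  refine tendsto_atTop_of_tendsto_survival_zero hd hnn hpos ?_
  have hRv0 : Tendsto (fun i => R i * (v i)⁻¹) l (𝓝 0) := by
    simpa using hR.mul (tendsto_inv_atTop_zero.comp hv)
  refine tendsto_of_tendsto_of_tendsto_of_le_of_le' tendsto_const_nhds hRv0
    (Eventually.of_forall fun i => (survival_pos hd hnn hpos _).le) ?_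
  filter_upwards [hRv, hv.eventually_gt_atTop 0] with i hRi hvi
  rw [hRi, mul_comm, inv_mul_cancel_left₀ hvi.ne']
  exact le_div_self (survival_pos hd hnn hpos _).le (survival_pos hd hnn hpos _)
    (survival_le_one hd h1 hnn _)

theorem survival_div_survival_div_eq {γ x s : ℝ} (hx : 0 < x) (hs : 0 < s) :
    survival d x / survival d (x / s) =
      s ^ (-γ) * (scaledSurvival d γ x / scaledSurvival d γ (x / s)) := by
  rw [scaledSurvival, scaledSurvival, Real.div_rpow hx.le hs.le, Real.rpow_neg hs.le]
  have := (Real.rpow_pos_of_pos hx γ).ne'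
  have := (Real.rpow_pos_of_pos hs γ).ne'
  field_simp

end Survival

theorem integral_Ioi_one_const_mul_rpow {γ : ℝ} (hγ : 0 < γ) (c : ℝ) :
    ∫ r in Ioi (1 : ℝ), c * r ^ (-(γ + 1)) = c / γ := by
  rw [integral_const_mul, integral_Ioi_rpow_of_lt (by linarith) one_pos, Real.one_rpow,
    show -(γ + 1) + 1 = -γ by ring]
  field_simp

theorem integrableOn_Ioi_one_const_mul_rpow {γ : ℝ} (hγ : 0 < γ) (c : ℝ) :
    IntegrableOn (fun r : ℝ => c * r ^ (-(γ + 1))) (Ioi 1) :=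
  (integrableOn_Ioi_rpow_of_lt (by linarith) one_pos).const_mul c

theorem rpow_mul_eq_mul_mul_rpow_mul_rpow_neg {t r : ℝ} (ht : 0 < t) (hr : 0 < r) (a e : ℝ) :
    t ^ e * a = a * (t * r) ^ e * r ^ (-e) := by
  rw [Real.mul_rpow ht.le hr.le, Real.rpow_neg hr.le]
  have := (Real.rpow_pos_of_pos hr e).ne'
  field_simp

theorem scaledSurvival_eq_integral {d : ℝ → ℝ} {γ t : ℝ} (ht : 0 < t) :
    scaledSurvival d γ t = ∫ r in Ioi 1, d (t * r) * (t * r) ^ (γ + 1) * r ^ (-(γ + 1)) := by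
  have hsub : survival d t = t * ∫ r in Ioi 1, d (t * r) := by
    rw [integral_comp_mul_left_Ioi d 1 ht, mul_one, smul_eq_mul, ← mul_assoc,
      mul_inv_cancel₀ ht.ne', one_mul, survival]
  rw [scaledSurvival, hsub, ← mul_assoc, ← Real.rpow_add_one ht.ne', ← integral_const_mul]
  exact setIntegral_congr_fun measurableSet_Ioi fun r (hr : 1 < r) =>
    rpow_mul_eq_mul_mul_rpow_mul_rpow_neg ht (one_pos.trans hr) _ _

namespace IsMPT

variable {d : ℝ → ℝ} {γ Cd : ℝ}

theorem tendsto_div_comp_div (h : IsMPT d γ Cd) {θ : ℝ} (hθ : 1 < θ) :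
    Tendsto (fun z => d (z / θ) / d z) atTop (𝓝 (θ ^ (γ + 1))) := by
  have hθ0 : 0 < θ := one_pos.trans hθ
  have hlim := ((h.tail.comp (tendsto_id.atTop_div_const hθ0)).div h.tail h.Cd_pos.ne').mul_const
    (θ ^ (γ + 1))
  rw [div_self h.Cd_pos.ne', one_mul] at hlim
  refine hlim.congr' ?_
  filter_upwards [eventually_gt_atTop 0] with z hz
  have := (h.pos z hz).ne'
  have := (Real.rpow_pos_of_pos hz (γ + 1)).ne'
  have := (Real.rpow_pos_of_pos hθ0 (γ + 1)).ne'
  simp only [Pi.div_apply, Function.comp_apply, id, Real.div_rpow hz.le hθ0.le]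
  field_simp

/-- Monotonicity of the likelihood ratio in `x` upgrades the limit `θ ^ (γ + 1)` of
`d (x / θ) / d x` to a strict upper bound, which is the claim for `θ = y / x`. -/
theorem strictMonoOn_mul_rpow (h : IsMPT d γ Cd) :
    StrictMonoOn (fun x => d x * x ^ (γ + 1)) (Ioi 0) := by
  intro x (hx : 0 < x) y (hy : 0 < y) hxy
  have hθ : 1 < y / x := (one_lt_div hx).2 hxy
  have hlt : d (y / (y / x)) / d y < (y / x) ^ (γ + 1) := by
    refine (h.mlr _ hθ hy (mem_Ioi.2 (by linarith)) (lt_add_one y)).trans_le ?_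
    refine ge_of_tendsto (h.tendsto_div_comp_div hθ) ?_
    filter_upwards [eventually_ge_atTop (y + 1)] with z hz
    exact (h.mlr _ hθ).monotoneOn (mem_Ioi.2 (by linarith)) (mem_Ioi.2 (by linarith)) hz
  rw [div_div_cancel₀ hy.ne', Real.div_rpow hy.le hx.le,
    div_lt_div_iff₀ (h.pos y hy) (Real.rpow_pos_of_pos hx _)] at hlt
  simpa only [mul_comm] using hlt

theorem mul_rpow_lt (h : IsMPT d γ Cd) {x : ℝ} (hx : 0 < x) : d x * x ^ (γ + 1) < Cd := by
  have hmono := h.strictMonoOn_mul_rpow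
  refine (hmono hx (mem_Ioi.2 (by linarith)) (lt_add_one x)).trans_le (ge_of_tendsto h.tail ?_)
  filter_upwards [eventually_ge_atTop (x + 1)] with z hz
  exact hmono.monotoneOn (mem_Ioi.2 (by linarith)) (mem_Ioi.2 (by linarith)) hz

theorem integrableOn_scaledSurvival_integrand (h : IsMPT d γ Cd) {t : ℝ} (ht : 0 < t) :
    IntegrableOn (fun r => d (t * r) * (t * r) ^ (γ + 1) * r ^ (-(γ + 1))) (Ioi 1) := by
  refine (((h.integrable.comp_mul_left' ht.ne').const_mul (t ^ (γ + 1))).integrableOn).congr_fun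
    (fun r (hr : 1 < r) => rpow_mul_eq_mul_mul_rpow_mul_rpow_neg ht (one_pos.trans hr) _ _)
    measurableSet_Ioi

theorem scaledSurvival_le (h : IsMPT d γ Cd) {t : ℝ} (ht : 0 < t) :
    scaledSurvival d γ t ≤ Cd / γ := by
  rw [scaledSurvival_eq_integral ht, ← integral_Ioi_one_const_mul_rpow h.gamma_pos Cd]
  refine setIntegral_mono_on (h.integrableOn_scaledSurvival_integrand ht)
    (integrableOn_Ioi_one_const_mul_rpow h.gamma_pos Cd) measurableSet_Ioi fun r (hr : 1 < r) => ?_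
  have hr0 : 0 < r := one_pos.trans hr
  exact mul_le_mul_of_nonneg_right (h.mul_rpow_lt (mul_pos ht hr0)).le
    (Real.rpow_pos_of_pos hr0 _).le

theorem eventually_div_le_scaledSurvival (h : IsMPT d γ Cd) {c : ℝ} (hc : c < Cd) :
    ∀ᶠ t in atTop, c / γ ≤ scaledSurvival d γ t := by
  obtain ⟨T, hT⟩ := eventually_atTop.1 ((tendsto_order.1 h.tail).1 c hc)
  filter_upwards [eventually_ge_atTop T, eventually_gt_atTop 0] with t hTt ht
  rw [scaledSurvival_eq_integral ht, ← integral_Ioi_one_const_mul_rpow h.gamma_pos c]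
  refine setIntegral_mono_on (integrableOn_Ioi_one_const_mul_rpow h.gamma_pos c)
    (h.integrableOn_scaledSurvival_integrand ht) measurableSet_Ioi fun r (hr : 1 < r) => ?_
  have hr0 : 0 < r := one_pos.trans hr
  exact mul_le_mul_of_nonneg_right (hT _ (by nlinarith)).le (Real.rpow_pos_of_pos hr0 _).le

theorem tendsto_scaledSurvival (h : IsMPT d γ Cd) :
    Tendsto (scaledSurvival d γ) atTop (𝓝 (Cd / γ)) := by
  refine tendsto_order.2 ⟨fun a ha => ?_, fun a ha => ?_⟩
  · obtain ⟨c, hac, hc⟩ := exists_between ((lt_div_iff₀ h.gamma_pos).1 ha)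
    filter_upwards [h.eventually_div_le_scaledSurvival hc] with t ht
    exact ((lt_div_iff₀ h.gamma_pos).2 hac).trans_le ht
  · filter_upwards [eventually_gt_atTop 0] with t ht
    exact (h.scaledSurvival_le ht).trans_lt ha

theorem strictMonoOn_scaledSurvival (h : IsMPT d γ Cd) :
    StrictMonoOn (scaledSurvival d γ) (Ioi 0) := by
  intro s (hs : 0 < s) t (ht : 0 < t) hst
  rw [← sub_pos, scaledSurvival_eq_integral ht, scaledSurvival_eq_integral hs,
    ← integral_sub (h.integrableOn_scaledSurvival_integrand ht)
      (h.integrableOn_scaledSurvival_integrand hs)]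
  refine setIntegral_pos_of_forall_mem_pos measurableSet_Ioi
    ((h.integrableOn_scaledSurvival_integrand ht).sub
      (h.integrableOn_scaledSurvival_integrand hs)) (fun r (hr : 1 < r) => ?_) (by simp)
  have hr0 : 0 < r := one_pos.trans hr
  rw [sub_pos]
  exact mul_lt_mul_of_pos_right (h.strictMonoOn_mul_rpow (mul_pos hs hr0) (mul_pos ht hr0)
    (mul_lt_mul_of_pos_right hst hr0)) (Real.rpow_pos_of_pos hr0 _)

theorem scaledSurvival_pos (h : IsMPT d γ Cd) {t : ℝ} (ht : 0 < t) : 0 < scaledSurvival d γ t :=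
  mul_pos (Real.rpow_pos_of_pos ht _) (survival_pos h.integrable h.nonneg h.pos t)

theorem continuousAt_scaledSurvival (h : IsMPT d γ Cd) {t : ℝ} (ht : 0 < t) :
    ContinuousAt (scaledSurvival d γ) t :=
  (Real.continuousAt_rpow_const t γ (Or.inl ht.ne')).mul
    (continuous_survival h.integrable).continuousAt

end IsMPT

section Asymptotics

variable {ι : Type*} {l : Filter ι} {u v : ι → ℝ}

theorem isEquivalent_sqrt_one_add (hu : Tendsto u l atTop) :
    (fun i => √(1 + u i)) ~[l] fun i => √(u i) := by
  refine isEquivalent_of_tendsto_one ?_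
  have hlim := ((tendsto_inv_atTop_zero.comp hu).add_const 1).sqrt
  rw [zero_add, Real.sqrt_one] at hlim
  refine hlim.congr' ?_
  filter_upwards [hu.eventually_gt_atTop 0] with i hi
  rw [Pi.div_apply, ← Real.sqrt_div' _ hi.le, Function.comp_apply, add_div, div_self hi.ne',
    one_div, add_comm]

theorem tendsto_mul_sqrt_one_add_rpow_neg {γ c : ℝ} (hu : Tendsto u l atTop)
    (hvu : Tendsto (fun i => v i * u i ^ (-(γ / 2))) l (𝓝 c)) :
    Tendsto (fun i => v i * √(1 + u i) ^ (-γ)) l (𝓝 c) := by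
  have hequiv : (fun i => v i * √(1 + u i) ^ (-γ)) ~[l] fun i => v i * √(u i) ^ (-γ) :=
    IsEquivalent.refl.mul ((isEquivalent_sqrt_one_add hu).rpow fun i => Real.sqrt_nonneg _)
  refine hequiv.tendsto_nhds_iff.2 (hvu.congr' ?_)
  filter_upwards [hu.eventually_ge_atTop 0] with i hi
  rw [Real.sqrt_eq_rpow, ← Real.rpow_mul hi]
  ring_nf

theorem isEquivalent_rpow_of_tendsto_mul_rpow_neg {γ c : ℝ} (hγ : 0 < γ) (hc : 0 < c)
    (hu : Tendsto u l atTop) (hvu : Tendsto (fun i => v i * u i ^ (-(γ / 2))) l (𝓝 c)) :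
    (fun i => (v i / c) ^ (2 / γ)) ~[l] u := by
  refine isEquivalent_of_tendsto_one ?_
  have hlim := (hvu.div_const c).rpow_const (p := 2 / γ) (Or.inl (div_pos hc hc).ne')
  rw [div_self hc.ne', Real.one_rpow] at hlim
  refine hlim.congr' ?_
  filter_upwards [hu.eventually_gt_atTop 0, hvu.eventually (eventually_gt_nhds hc)] with i hu hv
  have hv0 : 0 ≤ v i := (pos_of_mul_pos_left hv (Real.rpow_pos_of_pos hu _).le).le
  rw [Pi.div_apply, mul_div_right_comm, Real.mul_rpow (div_nonneg hv0 hc.le)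
    (Real.rpow_pos_of_pos hu _).le, ← Real.rpow_mul hu.le, show -(γ / 2) * (2 / γ) = -1 by
    field_simp, Real.rpow_neg_one, ← div_eq_mul_inv]

theorem tendsto_atTop_of_tendsto_mul_rpow_neg {γ c : ℝ} (hγ : 0 < γ) (hc : 0 < c)
    (hu : Tendsto u l atTop) (hvu : Tendsto (fun i => v i * u i ^ (-(γ / 2))) l (𝓝 c)) :
    Tendsto v l atTop := by
  refine (hvu.pos_mul_atTop hc ((tendsto_rpow_atTop (half_pos hγ)).comp hu)).congr' ?_
  filter_upwards [hu.eventually_gt_atTop 0] with i hi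
  rw [Function.comp_apply, mul_assoc, ← Real.rpow_add hi, neg_add_cancel, Real.rpow_zero, mul_one]

theorem tendsto_sq_div_iff_tendsto_div_sqrt {γ C c : ℝ} {ω : ι → ℝ} (hγ : 0 < γ) (hC : 0 < C)
    (hc : 0 < c) (hω : ∀ᶠ i in l, 0 ≤ ω i) (hu : Tendsto u l atTop)
    (hvu : Tendsto (fun i => v i * u i ^ (-(γ / 2))) l (𝓝 c)) :
    Tendsto (fun i => ω i ^ 2 / (C * (v i / c) ^ (2 / γ))) l (𝓝 1) ↔
      Tendsto (fun i => ω i / √(u i)) l (𝓝 √C) := by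
  have hequiv : (fun i => ω i ^ 2 / (C * (v i / c) ^ (2 / γ))) ~[l] fun i => ω i ^ 2 / (C * u i) :=
    IsEquivalent.refl.div
      (IsEquivalent.refl.mul (isEquivalent_rpow_of_tendsto_mul_rpow_neg hγ hc hu hvu))
  rw [hequiv.tendsto_nhds_iff]
  constructor
  · intro hlim
    have hsqrt := (hlim.const_mul C).sqrt
    rw [mul_one] at hsqrt
    refine hsqrt.congr' ?_
    filter_upwards [hω, hu.eventually_gt_atTop 0] with i hωi hui
    rw [← Real.sqrt_sq (div_nonneg hωi (Real.sqrt_nonneg (u i))), div_pow, Real.sq_sqrt hui.le]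
    field_simp
  · intro hlim
    have hsq := (hlim.pow 2).div_const C
    rw [Real.sq_sqrt hC.le, div_self hC.ne'] at hsq
    refine hsq.congr' ?_
    filter_upwards [hu.eventually_gt_atTop 0] with i hui
    rw [div_pow, Real.sq_sqrt hui.le, div_div, mul_comm]

end Asymptotics

namespace IsMPT

variable {d : ℝ → ℝ} {γ Cd : ℝ} {ι : Type*} {l : Filter ι} {u ω V : ι → ℝ} {a c : ℝ}

theorem tendsto_mul_scaledSurvival_div_of_tendsto_div_sqrt (h : IsMPT d γ Cd) (ha : 0 < a)
    (hu : Tendsto u l atTop) (hV : Tendsto V l (𝓝 c))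
    (hw : Tendsto (fun i => ω i / √(u i)) l (𝓝 a)) :
    Tendsto (fun i => V i * (scaledSurvival d γ (ω i) / scaledSurvival d γ (ω i / √(1 + u i))))
      l (𝓝 (c * (Cd / γ) / scaledSurvival d γ a)) := by
  have hω : Tendsto ω l atTop := by
    refine (hw.pos_mul_atTop ha (Real.tendsto_sqrt_atTop.comp hu)).congr' ?_
    filter_upwards [hu.eventually_gt_atTop 0] with i hi
    exact div_mul_cancel₀ _ (Real.sqrt_pos.2 hi).ne'
  have hb : Tendsto (fun i => ω i / √(1 + u i)) l (𝓝 a) :=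
    (IsEquivalent.refl.div (isEquivalent_sqrt_one_add hu)).tendsto_nhds_iff.2 hw
  rw [mul_div_assoc]
  exact hV.mul ((h.tendsto_scaledSurvival.comp hω).div
    ((h.continuousAt_scaledSurvival ha).tendsto.comp hb) (h.scaledSurvival_pos ha).ne')

theorem tendsto_div_sqrt_of_tendsto_mul_scaledSurvival_div (h : IsMPT d γ Cd) (ha : 0 < a)
    (hc : 0 < c) (hu : Tendsto u l atTop) (hV : Tendsto V l (𝓝 c)) (hω : Tendsto ω l atTop)
    (hR : Tendsto
      (fun i => V i * (scaledSurvival d γ (ω i) / scaledSurvival d γ (ω i / √(1 + u i))))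
      l (𝓝 (c * (Cd / γ) / scaledSurvival d γ a))) :
    Tendsto (fun i => ω i / √(u i)) l (𝓝 a) := by
  have hK : 0 < c * (Cd / γ) := mul_pos hc (div_pos h.Cd_pos h.gamma_pos)
  have hb_pos : ∀ᶠ i in l, 0 < ω i / √(1 + u i) := by
    filter_upwards [hω.eventually_gt_atTop 0, hu.eventually_gt_atTop 0] with i hωi hui
    exact div_pos hωi (Real.sqrt_pos.2 (by linarith))
  have hHb : Tendsto (fun i => scaledSurvival d γ (ω i / √(1 + u i))) l
      (𝓝 (scaledSurvival d γ a)) := by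
    have hlim := (hV.mul (h.tendsto_scaledSurvival.comp hω)).div hR
      (div_pos hK (h.scaledSurvival_pos ha)).ne'
    rw [div_div_cancel₀ hK.ne'] at hlim
    refine hlim.congr' ?_
    filter_upwards [hV.eventually (eventually_gt_nhds hc), hω.eventually_gt_atTop 0, hb_pos]
      with i hVi hωi hbi
    have := (h.scaledSurvival_pos hωi).ne'
    have := (h.scaledSurvival_pos hbi).ne'
    simp only [Pi.div_apply, Function.comp_apply]
    field_simp
  exact (IsEquivalent.refl.div (isEquivalent_sqrt_one_add hu)).tendsto_nhds_iff.1
    (tendsto_of_tendsto_comp_of_strictMonoOn h.strictMonoOn_scaledSurvival ha hb_pos hHb)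

end IsMPT

theorem bfdr_constant_eq {d : ℝ → ℝ} (hd : Integrable d) (h1 : ∫ t, d t = 1) {γ Cd C : ℝ}
    (hCd : Cd ≠ 0) (hC : 0 < C) :
    2 * √C * d √C / γ / (1 - (2 * cdf d √C - 1)) =
      C ^ ((γ + 1) / 2) * d √C / Cd * (Cd / γ) / scaledSurvival d γ √C := by
  have hsplit : C ^ ((γ + 1) / 2) = √C ^ γ * √C := by
    rw [Real.sqrt_eq_rpow, ← Real.rpow_mul hC.le, ← Real.rpow_add hC]
    ring_nf
  have hS : 1 - (2 * cdf d √C - 1) = 2 * survival d √C := by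
    linarith [one_sub_cdf_eq_survival hd h1 √C]
  have := (Real.rpow_pos_of_pos (Real.sqrt_pos.2 hC) γ).ne'
  rw [hS, hsplit, scaledSurvival]
  field_simp

theorem BFDR_procedure_ABOS_iff_general (d : ℝ → ℝ) (γ Cd : ℝ) (h : IsMPT d γ Cd)
    (C : ℝ) (hC : 0 < C)
    (u : ℕ → ℝ) (hu' : Tendsto u atTop atTop)
    (δ : ℕ → ℝ)
    (f v : ℕ → ℝ) (hv : ∀ m, v m = δ m * f m)
    (hvu : Tendsto (fun m => v m * u m ^ (-(γ / 2))) atTop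
      (nhds (C ^ ((γ + 1) / 2) * d (Real.sqrt C) / Cd)))
    (α : ℕ → ℝ)
    (ωB : ℕ → ℝ) (hωB : ∀ m, 0 < ωB m)
    (hωBeq : ∀ m, (1 - cdf d (ωB m)) / (1 - cdf d (ωB m * (1 + u m) ^ (-(1 : ℝ) / 2)))
      = (α m / (1 - α m)) / f m) :
    Tendsto
      (fun m => ωB m ^ 2 / (C * (v m / (C ^ ((γ + 1) / 2) * d (Real.sqrt C) / Cd)) ^ (2 / γ)))
      atTop (nhds 1) ↔
    Tendsto (fun m => δ m * (α m / (1 - α m))) atTop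
      (nhds ((2 * Real.sqrt C * d (Real.sqrt C) / γ) / (1 - (2 * cdf d (Real.sqrt C) - 1)))) := by
  have hsC : 0 < √C := Real.sqrt_pos.2 hC
  have hC0 : 0 < C ^ ((γ + 1) / 2) * d √C / Cd :=
    div_pos (mul_pos (Real.rpow_pos_of_pos hC _) (h.pos _ hsC)) h.Cd_pos
  have hv_top := tendsto_atTop_of_tendsto_mul_rpow_neg h.gamma_pos hC0 hu' hvu
  have hRS : ∀ᶠ m in atTop, δ m * (α m / (1 - α m)) =
      v m * (survival d (ωB m) / survival d (ωB m / √(1 + u m))) := by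
    filter_upwards [hv_top.eventually_gt_atTop 0, hu'.eventually_gt_atTop 0] with m hvm hum
    have hfm : f m ≠ 0 := right_ne_zero_of_mul (hv m ▸ hvm.ne')
    have hb : ωB m / √(1 + u m) = ωB m * (1 + u m) ^ (-(1 : ℝ) / 2) := by
      rw [Real.sqrt_eq_rpow, div_eq_mul_inv, ← Real.rpow_neg (by linarith), neg_div]
    rw [← one_sub_cdf_eq_survival h.integrable h.integral_one,
      ← one_sub_cdf_eq_survival h.integrable h.integral_one, hb, hωBeq m, hv m]
    field_simp
  have hRH : ∀ᶠ m in atTop, δ m * (α m / (1 - α m)) = v m * √(1 + u m) ^ (-γ) *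
      (scaledSurvival d γ (ωB m) / scaledSurvival d γ (ωB m / √(1 + u m))) := by
    filter_upwards [hRS, hu'.eventually_gt_atTop 0] with m hm hum
    rw [hm, survival_div_survival_div_eq (hωB m) (Real.sqrt_pos.2 (by linarith)), mul_assoc]
  have hV := tendsto_mul_sqrt_one_add_rpow_neg hu' hvu
  rw [tendsto_sq_div_iff_tendsto_div_sqrt h.gamma_pos hC hC0
    (Eventually.of_forall fun m => (hωB m).le) hu' hvu,
    bfdr_constant_eq h.integrable h.integral_one h.Cd_pos.ne' hC, tendsto_congr' hRH]
  refine ⟨h.tendsto_mul_scaledSurvival_div_of_tendsto_div_sqrt hsC hu' hV, fun hR => ?_⟩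
  refine h.tendsto_div_sqrt_of_tendsto_mul_scaledSurvival_div hsC hC0 hu' hV ?_ hR
  exact tendsto_atTop_of_tendsto_mul_survival_div h.integrable h.integral_one h.nonneg h.pos
    hv_top ((tendsto_congr' hRH).2 hR) hRS

/-- Proposition 3 (ABOS condition for BFDR control): under the asymptotic framework with
`p_m → 0`, the fixed thresholding procedure with threshold `ω_{B,m}` solving the BFDR equation
`(1 - D ω) / (1 - D (ω * (1 + u_m) ^ (-1/2))) = r_{α_m} / f_m` is ABOS, i.e.
`ω_{B,m} ^ 2 / (C * (v_m / C₀) ^ (2/γ)) → 1`, if and only if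
`δ_m * r_{α_m} → C₁ / (1 - C₂)`. -/
theorem BFDR_procedure_ABOS_iff (d : ℝ → ℝ) (γ Cd : ℝ) (h : IsMPT d γ Cd)
    (heven : ∀ x, d (-x) = d x) (hcont : ContinuousOn d (Set.Ioi 0))
    (C : ℝ) (hC : 0 < C)
    (p : ℕ → ℝ) (hp : ∀ m, p m ∈ Set.Ioo (0 : ℝ) 1) (hp0 : Tendsto p atTop (nhds 0))
    (u : ℕ → ℝ) (hu : ∀ m, 0 < u m) (hu' : Tendsto u atTop atTop)
    (δ : ℕ → ℝ) (hδ : ∀ m, 0 < δ m)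
    (f v : ℕ → ℝ) (hf : ∀ m, f m = (1 - p m) / p m) (hv : ∀ m, v m = δ m * f m)
    (hvu : Tendsto (fun m => v m * u m ^ (-(γ / 2))) atTop
      (nhds (C ^ ((γ + 1) / 2) * d (Real.sqrt C) / Cd)))
    (α : ℕ → ℝ) (hα : ∀ m, α m ∈ Set.Ioo (0 : ℝ) 1)
    (ωB : ℕ → ℝ) (hωB : ∀ m, 0 < ωB m)
    (hωBeq : ∀ m, (1 - cdf d (ωB m)) / (1 - cdf d (ωB m * (1 + u m) ^ (-(1 : ℝ) / 2)))
      = (α m / (1 - α m)) / f m) :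
    Tendsto
      (fun m => ωB m ^ 2 / (C * (v m / (C ^ ((γ + 1) / 2) * d (Real.sqrt C) / Cd)) ^ (2 / γ)))
      atTop (nhds 1) ↔
    Tendsto (fun m => δ m * (α m / (1 - α m))) atTop
      (nhds ((2 * Real.sqrt C * d (Real.sqrt C) / γ) / (1 - (2 * cdf d (Real.sqrt C) - 1)))) :=
  BFDR_procedure_ABOS_iff_general d γ Cd h C hC u hu' δ f v hv hvu α ωB hωB hωBeq
end
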